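/- arXiv:2603.12060 — 8 statements merged into one kernel-verified Lean document; each statement's English description precedes it below -/
import Mathlib

section
/- For every d ∈ ℕ and η ∈ ℝ, the softmax function with temperature η, defined on ℝ^d by f(x)_i = exp(η·x_i)/Σ_j exp(η·x_j), is |η|-Lipschitz with respect to the Euclidean norm. -/
set_option maxHeartbeats 1000000

open Finset

/-- Key quadratic inequality for the softmax Jacobian. -/
lemma softmax_key_sum {d : ℕ} (p v : Fin d → ℝ) (hp0 : ∀ i, 0 ≤ p i)
    (hp1 : ∀ i, p i ≤ 1) (hsum : ∑ i, p i = 1) :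
    ∑ i, (p i * (v i - ∑ j, p j * v j)) ^ 2 ≤ ∑ i, v i ^ 2 := by
  set m := ∑ j, p j * v j with hm
  calc ∑ i, (p i * (v i - m)) ^ 2
      ≤ ∑ i, p i * (v i - m) ^ 2 := by
        refine Finset.sum_le_sum fun i _ => ?_
        have h0 := hp0 i; have h1 := hp1 i
        have hps : p i ^ 2 ≤ p i := by nlinarith
        calc (p i * (v i - m)) ^ 2 = p i ^ 2 * (v i - m) ^ 2 := by ring
          _ ≤ p i * (v i - m) ^ 2 := mul_le_mul_of_nonneg_right hps (sq_nonneg _)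
    _ = ∑ i, p i * v i ^ 2 - m ^ 2 := by
        have h : ∀ i : Fin d, p i * (v i - m) ^ 2
            = p i * v i ^ 2 - 2 * m * (p i * v i) + m ^ 2 * p i := fun i => by ring
        simp_rw [h]
        rw [Finset.sum_add_distrib, Finset.sum_sub_distrib, ← Finset.mul_sum,
          ← Finset.mul_sum, ← hm, hsum]
        ring
    _ ≤ ∑ i, p i * v i ^ 2 := by nlinarith [sq_nonneg m]
    _ ≤ ∑ i, v i ^ 2 := by
        refine Finset.sum_le_sum fun i _ => ?_
        exact mul_le_of_le_one_left (sq_nonneg _) (hp1 i)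

/-- Candidate derivative of softmax at `x`. -/
noncomputable def smD (d : ℕ) (η : ℝ) (x : EuclideanSpace ℝ (Fin d)) :
    EuclideanSpace ℝ (Fin d) →L[ℝ] EuclideanSpace ℝ (Fin d) :=
  (PiLp.continuousLinearEquiv 2 ℝ fun _ : Fin d => ℝ).symm.toContinuousLinearMap.comp
    (ContinuousLinearMap.pi fun i =>
      η • ((Real.exp (η * x i) / ∑ j, Real.exp (η * x j)) •
        (EuclideanSpace.proj i -
          ∑ j, (Real.exp (η * x j) / ∑ k, Real.exp (η * x k)) • EuclideanSpace.proj j)))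

lemma smD_apply (d : ℕ) (η : ℝ) (x v : EuclideanSpace ℝ (Fin d)) (i : Fin d) :
    smD d η x v i =
      η * ((Real.exp (η * x i) / ∑ j, Real.exp (η * x j)) *
        (v i - ∑ j, (Real.exp (η * x j) / ∑ k, Real.exp (η * x k)) * v j)) := by
  simp [smD, ContinuousLinearMap.pi_apply, ContinuousLinearMap.sum_apply,
    ContinuousLinearMap.smul_apply, ContinuousLinearMap.sub_apply,
    PiLp.proj_apply]

noncomputable def sm (d : ℕ) (η : ℝ) :
    EuclideanSpace ℝ (Fin d) → EuclideanSpace ℝ (Fin d) :=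
  fun x => WithLp.toLp 2 (fun i => Real.exp (η * x i) / ∑ j, Real.exp (η * x j))

lemma smHasFDeriv (d : ℕ) (η : ℝ) (hd : 0 < d) (x : EuclideanSpace ℝ (Fin d)) :
    HasFDerivAt (sm d η) (smD d η x) x := by
  haveI : Nonempty (Fin d) := ⟨⟨0, hd⟩⟩
  have hSpos : ∀ y : EuclideanSpace ℝ (Fin d), 0 < ∑ j, Real.exp (η * y j) :=
    fun y => Finset.sum_pos (fun j _ => Real.exp_pos _) Finset.univ_nonempty
  have hSne : (∑ j, Real.exp (η * x j)) ≠ 0 := (hSpos x).ne'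
  have hproj : ∀ i : Fin d, HasFDerivAt (fun y : EuclideanSpace ℝ (Fin d) => y i)
      (EuclideanSpace.proj (𝕜 := ℝ) i) x := fun i => (EuclideanSpace.proj (𝕜 := ℝ) i :
      EuclideanSpace ℝ (Fin d) →L[ℝ] ℝ).hasFDerivAt (x := x)
  have hexp : ∀ i : Fin d, HasFDerivAt (fun y : EuclideanSpace ℝ (Fin d) => Real.exp (η * y i))
      (Real.exp (η * x i) • (η • EuclideanSpace.proj (𝕜 := ℝ) i)) x :=
    fun i => ((hproj i).const_mul η).exp
  have hS : HasFDerivAt (fun y : EuclideanSpace ℝ (Fin d) => ∑ j, Real.exp (η * y j))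
      (∑ j, Real.exp (η * x j) • (η • EuclideanSpace.proj (𝕜 := ℝ) j)) x :=
    HasFDerivAt.fun_sum fun j _ => hexp j
  have hinv : HasFDerivAt (fun y : EuclideanSpace ℝ (Fin d) => (∑ j, Real.exp (η * y j))⁻¹)
      ((-((∑ j, Real.exp (η * x j)) ^ 2)⁻¹) •
        (∑ j, Real.exp (η * x j) • (η • EuclideanSpace.proj (𝕜 := ℝ) j))) x :=
    (hasDerivAt_inv hSne).comp_hasFDerivAt x hS
  have hcomp : ∀ i : Fin d, HasFDerivAt
      (fun y : EuclideanSpace ℝ (Fin d) => Real.exp (η * y i) * (∑ j, Real.exp (η * y j))⁻¹)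
      (Real.exp (η * x i) • ((-((∑ j, Real.exp (η * x j)) ^ 2)⁻¹) •
          (∑ j, Real.exp (η * x j) • (η • EuclideanSpace.proj (𝕜 := ℝ) j)))
        + (∑ j, Real.exp (η * x j))⁻¹ •
          (Real.exp (η * x i) • (η • EuclideanSpace.proj (𝕜 := ℝ) i))) x :=
    fun i => (hexp i).mul hinv
  have hpi : HasFDerivAt
      (fun y : EuclideanSpace ℝ (Fin d) =>
        (fun i => Real.exp (η * y i) * (∑ j, Real.exp (η * y j))⁻¹ : Fin d → ℝ))
      (ContinuousLinearMap.pi fun i =>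
        Real.exp (η * x i) • ((-((∑ j, Real.exp (η * x j)) ^ 2)⁻¹) •
            (∑ j, Real.exp (η * x j) • (η • EuclideanSpace.proj (𝕜 := ℝ) j)))
          + (∑ j, Real.exp (η * x j))⁻¹ •
            (Real.exp (η * x i) • (η • EuclideanSpace.proj (𝕜 := ℝ) i))) x :=
    hasFDerivAt_pi.2 hcomp
  have heq : smD d η x =
      (PiLp.continuousLinearEquiv 2 ℝ fun _ : Fin d => ℝ).symm.toContinuousLinearMap.comp
        (ContinuousLinearMap.pi fun i =>
          Real.exp (η * x i) • ((-((∑ j, Real.exp (η * x j)) ^ 2)⁻¹) •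
              (∑ j, Real.exp (η * x j) • (η • EuclideanSpace.proj (𝕜 := ℝ) j)))
            + (∑ j, Real.exp (η * x j))⁻¹ •
              (Real.exp (η * x i) • (η • EuclideanSpace.proj (𝕜 := ℝ) i))) := by
    refine ContinuousLinearMap.ext fun v => ?_
    refine PiLp.ext fun i => ?_
    have h1 := smD_apply d η x v i
    simp only [smD] at h1 ⊢
    rw [h1]
    simp only [ContinuousLinearMap.comp_apply, ContinuousLinearEquiv.coe_coe,
      PiLp.coe_symm_continuousLinearEquiv, ContinuousLinearMap.pi_apply,
      ContinuousLinearMap.add_apply, ContinuousLinearMap.smul_apply,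
      ContinuousLinearMap.sum_apply, PiLp.proj_apply, smul_eq_mul,
      PiLp.toLp_apply]
    have hA : ∑ j, (Real.exp (η * x j) / ∑ k, Real.exp (η * x k)) * v j
        = (∑ j, Real.exp (η * x j) * v j) / ∑ k, Real.exp (η * x k) := by
      rw [Finset.sum_div]
      exact Finset.sum_congr rfl fun j _ => by ring
    have hB : ∑ j, Real.exp (η * x j) * (η * v j)
        = η * ∑ j, Real.exp (η * x j) * v j := by
      rw [Finset.mul_sum]
      exact Finset.sum_congr rfl fun j _ => by ring
    rw [hA, hB]
    field_simp
    ring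
  rw [heq]
  have : HasFDerivAt (fun y : EuclideanSpace ℝ (Fin d) =>
      (PiLp.continuousLinearEquiv 2 ℝ fun _ : Fin d => ℝ).symm
        ((fun i => Real.exp (η * y i) * (∑ j, Real.exp (η * y j))⁻¹ : Fin d → ℝ)))
      ((PiLp.continuousLinearEquiv 2 ℝ fun _ : Fin d => ℝ).symm.toContinuousLinearMap.comp
        (ContinuousLinearMap.pi fun i =>
          Real.exp (η * x i) • ((-((∑ j, Real.exp (η * x j)) ^ 2)⁻¹) •
              (∑ j, Real.exp (η * x j) • (η • EuclideanSpace.proj (𝕜 := ℝ) j)))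
            + (∑ j, Real.exp (η * x j))⁻¹ •
              (Real.exp (η * x i) • (η • EuclideanSpace.proj (𝕜 := ℝ) i)))) x :=
    ((PiLp.continuousLinearEquiv 2 ℝ fun _ : Fin d => ℝ).symm.toContinuousLinearMap).hasFDerivAt.comp x hpi
  exact this.congr_of_eventuallyEq (Filter.Eventually.of_forall fun y =>
    PiLp.ext fun i => by simp [sm, div_eq_mul_inv])

lemma smD_norm (d : ℕ) (η : ℝ) (hd : 0 < d) (x : EuclideanSpace ℝ (Fin d)) :
    ‖smD d η x‖ ≤ |η| := by
  haveI : Nonempty (Fin d) := ⟨⟨0, hd⟩⟩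
  have hSpos : 0 < ∑ j, Real.exp (η * x j) :=
    Finset.sum_pos (fun j _ => Real.exp_pos _) Finset.univ_nonempty
  set p : Fin d → ℝ := fun i => Real.exp (η * x i) / ∑ j, Real.exp (η * x j) with hp
  have hp0 : ∀ i, 0 ≤ p i := fun i => div_nonneg (Real.exp_pos _).le hSpos.le
  have hp1 : ∀ i, p i ≤ 1 := fun i => by
    rw [hp, div_le_one hSpos]
    exact Finset.single_le_sum (fun j _ => (Real.exp_pos (η * x j)).le) (Finset.mem_univ i)
  have hpsum : ∑ i, p i = 1 := by
    rw [hp, ← Finset.sum_div, div_self hSpos.ne']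
  refine ContinuousLinearMap.opNorm_le_bound _ (abs_nonneg η) fun v => ?_
  rw [EuclideanSpace.norm_eq, EuclideanSpace.norm_eq]
  have key := softmax_key_sum p (fun i => v i) hp0 hp1 hpsum
  have habs : ∀ u : Fin d, ‖smD d η x v u‖ ^ 2 = η ^ 2 * (p u * (v u - ∑ j, p j * v j)) ^ 2 := by
    intro u
    rw [Real.norm_eq_abs, sq_abs, smD_apply]
    ring
  have hb : ∑ u, ‖smD d η x v u‖ ^ 2 ≤ η ^ 2 * ∑ i, v i ^ 2 := by
    simp_rw [habs]
    rw [← Finset.mul_sum]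
    exact mul_le_mul_of_nonneg_left key (sq_nonneg η)
  calc Real.sqrt (∑ u, ‖smD d η x v u‖ ^ 2)
      ≤ Real.sqrt (η ^ 2 * ∑ i, v i ^ 2) := Real.sqrt_le_sqrt hb
    _ = |η| * Real.sqrt (∑ i, v i ^ 2) := by
        rw [Real.sqrt_mul (sq_nonneg η), Real.sqrt_sq_eq_abs]
    _ = |η| * Real.sqrt (∑ i, ‖v i‖ ^ 2) := by
        simp [Real.norm_eq_abs, sq_abs]

/-- The softmax function with temperature `η` on `ℝ^d` (with Euclidean norms)
is `|η|`-Lipschitz. -/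
theorem softmax_lipschitz (d : ℕ) (η : ℝ) :
    LipschitzWith (Real.nnabs η)
      (fun x : EuclideanSpace ℝ (Fin d) =>
        (WithLp.toLp 2 (fun i => Real.exp (η * x i) / ∑ j, Real.exp (η * x j)) :
          EuclideanSpace ℝ (Fin d))) := by
  rcases Nat.eq_zero_or_pos d with hd | hd
  · subst hd
    haveI : Subsingleton (EuclideanSpace ℝ (Fin 0)) :=
      ⟨fun a b => PiLp.ext fun i => Fin.elim0 i⟩
    intro x y
    rw [Subsingleton.elim x y]
    simp
  · have main : LipschitzWith (Real.nnabs η) (sm d η) := by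
      refine lipschitzWith_of_nnnorm_fderiv_le
        (fun x => (smHasFDeriv d η hd x).differentiableAt) fun x => ?_
      rw [(smHasFDeriv d η hd x).fderiv]
      rw [← NNReal.coe_le_coe, coe_nnnorm, Real.coe_nnabs]
      exact smD_norm d η hd x
    exact main
end

section
/- Fix a finite set E of experts and M rounds with gain vectors g_m ∈ [a,b]^E for each m ∈ [M], where a < b. Define the EWA (exponentially weighted average) forecaster with learning rate η > 0 by p_{m}^e = exp(η·G_{m-1}^e)/Σ_{e'} exp(η·G_{m-1}^{e'}) with G_0^e = 0 and G_m^e = Σ_{m'≤m} g_{m'}^e. Then the regret R_M := max_{q ∈ P(E)} Σ_m ⟨q, g_m⟩ − Σ_m ⟨p_m, g_m⟩ satisfies R_M ≤ ln(|E|)/η + η·(b−a)²·M/8. -/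
lemma scalar_hoeffding (p : ℝ) (hp0 : 0 ≤ p) (hp1 : p ≤ 1) (h : ℝ) (hh : 0 ≤ h) :
    Real.log (1 - p + p * Real.exp h) ≤ p * h + h ^ 2 / 8 := by
  set g : ℝ → ℝ := fun t => 1 - p + p * Real.exp t with hgdef
  have hgpos : ∀ t, 0 < g t := by
    intro t
    have := Real.exp_pos t
    rcases lt_or_eq_of_le hp1 with h1 | h1
    · have : 0 < 1 - p := by linarith
      have : 0 ≤ p * Real.exp t := by positivity
      simp only [hgdef]; linarith
    · simp only [hgdef, ← h1]; nlinarith [Real.exp_pos t]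
  have hg' : ∀ t, HasDerivAt g (p * Real.exp t) t := by
    intro t
    exact ((Real.hasDerivAt_exp t).const_mul p).const_add (1 - p)
  set f : ℝ → ℝ := fun t => Real.log (g t) - p * t - t ^ 2 / 8 with hfdef
  set φ : ℝ → ℝ := fun t => p * Real.exp t / g t - p - t / 4 with hφdef
  have hf' : ∀ t, HasDerivAt f (φ t) t := by
    intro t
    have h1 : HasDerivAt (fun t => Real.log (g t)) (p * Real.exp t / g t) t :=
      (hg' t).log (hgpos t).ne'
    have h2 : HasDerivAt (fun t : ℝ => p * t) p t := by simpa using (hasDerivAt_id t).const_mul p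
    have h3 : HasDerivAt (fun t : ℝ => t ^ 2 / 8) (t / 4) t := by
      have := (hasDerivAt_pow 2 t).div_const 8
      exact this.congr_deriv (by rw [show (2:ℕ) - 1 = 1 from rfl]; push_cast; ring)
    exact (h1.sub h2).sub h3
  have hφ' : ∀ t, HasDerivAt φ
      ((p * Real.exp t * g t - p * Real.exp t * (p * Real.exp t)) / (g t) ^ 2 - 1 / 4) t := by
    intro t
    have h1 : HasDerivAt (fun t => p * Real.exp t / g t)
        ((p * Real.exp t * g t - p * Real.exp t * (p * Real.exp t)) / (g t) ^ 2) t :=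
      ((Real.hasDerivAt_exp t).const_mul p).div (hg' t) (hgpos t).ne'
    have h3 : HasDerivAt (fun t : ℝ => t / 4) (1 / 4) t := by simpa using (hasDerivAt_id t).div_const 4
    exact (h1.sub_const p).sub h3
  have hφanti : Antitone φ := by
    apply antitone_of_deriv_nonpos
    · exact fun t => (hφ' t).differentiableAt
    · intro t
      rw [(hφ' t).deriv]
      set q := p * Real.exp t / g t with hq
      have hgt := hgpos t
      have key : (p * Real.exp t * g t - p * Real.exp t * (p * Real.exp t)) / (g t) ^ 2
          = q * (1 - q) := by
        rw [hq]; field_simp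
      rw [key]
      nlinarith [sq_nonneg (q - 1/2)]
  have hφ0 : φ 0 = 0 := by simp [hφdef, hgdef]
  have hφnonpos : ∀ t ∈ Set.Ici (0:ℝ), φ t ≤ 0 := fun t ht => hφ0 ▸ hφanti ht
  have hfanti : AntitoneOn f (Set.Ici 0) := by
    apply antitoneOn_of_deriv_nonpos (convex_Ici 0)
    · exact (Continuous.continuousOn (by
        fun_prop (disch := intro t; exact (hgpos t).ne')) : ContinuousOn f _)
    · exact fun t _ => (hf' t).differentiableAt.differentiableWithinAt
    · intro t ht
      rw [(hf' t).deriv]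
      exact hφnonpos t (le_of_lt (by simpa using ht))
  have hf0 : f 0 = 0 := by simp [hfdef, hgdef]
  have := hfanti (Set.self_mem_Ici) (Set.mem_Ici.mpr hh) hh
  rw [hf0] at this
  simp only [hfdef] at this
  linarith [this]


lemma key_hoeffding (E : Type*) [Fintype E] (w x : E → ℝ) (a b η : ℝ)
    (hab : a < b) (hη : 0 < η) (hw : ∀ e, 0 ≤ w e) (hw1 : ∑ e, w e = 1)
    (hx : ∀ e, x e ∈ Set.Icc a b)
    (hscalar : ∀ p : ℝ, 0 ≤ p → p ≤ 1 → ∀ h : ℝ, 0 ≤ h →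
      Real.log (1 - p + p * Real.exp h) ≤ p * h + h ^ 2 / 8) :
    Real.log (∑ e, w e * Real.exp (η * x e))
      ≤ η * (∑ e, w e * x e) + η ^ 2 * (b - a) ^ 2 / 8 := by
  have hba : (0:ℝ) < b - a := by linarith
  set μ := ∑ e, w e * x e with hμdef
  set P := (μ - a) / (b - a) with hPdef
  have hμa : a ≤ μ := by
    calc a = ∑ e, w e * a := by rw [← Finset.sum_mul, hw1, one_mul]
    _ ≤ μ := Finset.sum_le_sum fun e _ => mul_le_mul_of_nonneg_left (hx e).1 (hw e)
  have hμb : μ ≤ b := by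
    calc μ ≤ ∑ e, w e * b := Finset.sum_le_sum fun e _ =>
          mul_le_mul_of_nonneg_left (hx e).2 (hw e)
    _ = b := by rw [← Finset.sum_mul, hw1, one_mul]
  have hP0 : 0 ≤ P := div_nonneg (by linarith) hba.le
  have hP1 : P ≤ 1 := (div_le_one hba).mpr (by linarith)
  set A := Real.exp (η * a) with hA
  set B := Real.exp (η * b) with hB
  -- convexity bound pointwise
  have hconv : ∀ e, Real.exp (η * x e)
      ≤ (b - x e) / (b - a) * A + (x e - a) / (b - a) * B := by
    intro e
    have h1 : 0 ≤ (b - x e) / (b - a) := div_nonneg (by linarith [(hx e).2]) hba.le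
    have h2 : 0 ≤ (x e - a) / (b - a) := div_nonneg (by linarith [(hx e).1]) hba.le
    have h3 : (b - x e) / (b - a) + (x e - a) / (b - a) = 1 := by
      field_simp; ring
    have := convexOn_exp.2 (Set.mem_univ (η * a)) (Set.mem_univ (η * b)) h1 h2 h3
    simp only [smul_eq_mul] at this
    have heq : (b - x e) / (b - a) * (η * a) + (x e - a) / (b - a) * (η * b) = η * x e := by
      field_simp; ring
    rwa [heq] at this
  have hsum : ∑ e, w e * Real.exp (η * x e) ≤ (1 - P) * A + P * B := by
    have step : ∑ e, w e * Real.exp (η * x e)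
        ≤ ∑ e, w e * ((b - x e) / (b - a) * A + (x e - a) / (b - a) * B) :=
      Finset.sum_le_sum fun e _ => mul_le_mul_of_nonneg_left (hconv e) (hw e)
    refine step.trans_eq ?_
    have expand : ∀ e, w e * ((b - x e) / (b - a) * A + (x e - a) / (b - a) * B)
        = (A / (b - a) * b - B / (b - a) * a) * w e
          + (B / (b - a) - A / (b - a)) * (w e * x e) := by
      intro e; field_simp; ring
    simp_rw [expand]
    rw [Finset.sum_add_distrib, ← Finset.mul_sum, ← Finset.mul_sum, hw1, ← hμdef]
    apply mul_right_cancel₀ hba.ne'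
    rw [hPdef]
    field_simp
    ring
  have hApos : 0 < A := Real.exp_pos _
  have hpos : 0 < ∑ e, w e * Real.exp (η * x e) := by
    have : A = ∑ e, w e * A := by rw [← Finset.sum_mul, hw1, one_mul]
    calc 0 < A := hApos
    _ = ∑ e, w e * A := this
    _ ≤ ∑ e, w e * Real.exp (η * x e) := Finset.sum_le_sum fun e _ =>
        mul_le_mul_of_nonneg_left (Real.exp_le_exp.mpr (by nlinarith [(hx e).1])) (hw e)
  have hfactor : (1 - P) * A + P * B = A * (1 - P + P * Real.exp (η * (b - a))) := by
    have : B = A * Real.exp (η * (b - a)) := by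
      rw [hA, hB, ← Real.exp_add]; ring_nf
    rw [this]; ring
  have hinner : 0 < 1 - P + P * Real.exp (η * (b - a)) := by
    have h1 : (1:ℝ) ≤ Real.exp (η * (b - a)) := Real.one_le_exp (by positivity)
    nlinarith
  calc Real.log (∑ e, w e * Real.exp (η * x e))
      ≤ Real.log ((1 - P) * A + P * B) := Real.log_le_log hpos hsum
    _ = η * a + Real.log (1 - P + P * Real.exp (η * (b - a))) := by
        rw [hfactor, Real.log_mul hApos.ne' hinner.ne', Real.log_exp]
    _ ≤ η * a + (P * (η * (b - a)) + (η * (b - a)) ^ 2 / 8) := by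
        have := hscalar P hP0 hP1 (η * (b - a)) (by positivity)
        linarith
    _ = η * μ + η ^ 2 * (b - a) ^ 2 / 8 := by
        have : P * (η * (b - a)) = η * (μ - a) := by
          rw [hPdef]; field_simp
        rw [this]; ring

/-- Regret bound of the exponentially weighted average (EWA) forecaster with
learning rate `η > 0` for gains in `[a, b]`. -/
theorem ewa_regret_bound (E : Type*) [Fintype E] [Nonempty E]
    (M : ℕ) (a b : ℝ) (hab : a < b) (η : ℝ) (hη : 0 < η)
    (g : ℕ → E → ℝ) (hg : ∀ m ∈ Finset.range M, ∀ e, g m e ∈ Set.Icc a b)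
    (G : ℕ → E → ℝ) (hG : ∀ m e, G m e = ∑ m' ∈ Finset.range m, g m' e)
    (p : ℕ → E → ℝ)
    (hp : ∀ m e, p m e = Real.exp (η * G m e) / ∑ e', Real.exp (η * G m e')) :
    ∀ q : E → ℝ, (∀ e, 0 ≤ q e) → (∑ e, q e) = 1 →
      (∑ m ∈ Finset.range M, ∑ e, q e * g m e)
        - (∑ m ∈ Finset.range M, ∑ e, p m e * g m e)
      ≤ Real.log (Fintype.card E) / η + η * (b - a) ^ 2 * M / 8 := by
  intro q hq hq1
  set W : ℕ → ℝ := fun m => ∑ e, Real.exp (η * G m e) with hWdef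
  have hWpos : ∀ m, 0 < W m := fun m =>
    Finset.sum_pos (fun e _ => Real.exp_pos _) Finset.univ_nonempty
  have hpnn : ∀ m e, 0 ≤ p m e := fun m e => by
    rw [hp]; positivity
  have hpsum : ∀ m, ∑ e, p m e = 1 := by
    intro m
    simp_rw [hp m]
    rw [← Finset.sum_div, div_self (hWpos m).ne']
  have hGsucc : ∀ m e, G (m + 1) e = G m e + g m e := by
    intro m e; rw [hG, hG, Finset.sum_range_succ]
  -- one-step bound
  have step : ∀ m ∈ Finset.range M,
      Real.log (W (m + 1)) - Real.log (W m)
        ≤ η * (∑ e, p m e * g m e) + η ^ 2 * (b - a) ^ 2 / 8 := by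
    intro m hm
    have hWsucc : W (m + 1) = W m * ∑ e, p m e * Real.exp (η * g m e) := by
      rw [hWdef, Finset.mul_sum]
      apply Finset.sum_congr rfl
      intro e _
      rw [hGsucc, hp, mul_add, Real.exp_add]
      field_simp
    have hspos : 0 < ∑ e, p m e * Real.exp (η * g m e) := by
      have : W (m + 1) > 0 := hWpos (m + 1)
      rw [hWsucc] at this
      nlinarith [hWpos m]
    have hlog : Real.log (W (m + 1)) = Real.log (W m)
        + Real.log (∑ e, p m e * Real.exp (η * g m e)) := by
      rw [hWsucc, Real.log_mul (hWpos m).ne' hspos.ne']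
    have hkey := key_hoeffding E (p m) (g m) a b η hab hη (hpnn m) (hpsum m)
      (hg m hm) scalar_hoeffding
    rw [hlog]; linarith
  -- telescoping sum
  have tele : Real.log (W M) - Real.log (W 0)
      ≤ η * (∑ m ∈ Finset.range M, ∑ e, p m e * g m e)
        + M * (η ^ 2 * (b - a) ^ 2 / 8) := by
    have h1 : Real.log (W M) - Real.log (W 0)
        = ∑ m ∈ Finset.range M, (Real.log (W (m + 1)) - Real.log (W m)) := by
      rw [Finset.sum_range_sub (fun m => Real.log (W m))]
    rw [h1, Finset.mul_sum]
    calc ∑ m ∈ Finset.range M, (Real.log (W (m + 1)) - Real.log (W m))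
        ≤ ∑ m ∈ Finset.range M, (η * (∑ e, p m e * g m e) + η ^ 2 * (b - a) ^ 2 / 8) :=
          Finset.sum_le_sum step
      _ = ∑ m ∈ Finset.range M, η * (∑ e, p m e * g m e)
            + M * (η ^ 2 * (b - a) ^ 2 / 8) := by
          rw [Finset.sum_add_distrib, Finset.sum_const, Finset.card_range, nsmul_eq_mul]
  have hW0 : W 0 = (Fintype.card E : ℝ) := by
    have : ∀ e : E, G 0 e = 0 := fun e => by rw [hG]; simp
    simp [hWdef, this]
  -- lower bound
  have hswap : ∑ m ∈ Finset.range M, ∑ e, q e * g m e = ∑ e, q e * G M e := by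
    rw [Finset.sum_comm]
    apply Finset.sum_congr rfl
    intro e _
    rw [hG, Finset.mul_sum]
  have lower : η * (∑ m ∈ Finset.range M, ∑ e, q e * g m e) ≤ Real.log (W M) := by
    rw [hswap]
    have h1 : ∀ e : E, η * G M e ≤ Real.log (W M) := by
      intro e
      have : Real.exp (η * G M e) ≤ W M :=
        Finset.single_le_sum (f := fun e' => Real.exp (η * G M e'))
          (fun e' _ => (Real.exp_pos _).le) (Finset.mem_univ e)
      calc η * G M e = Real.log (Real.exp (η * G M e)) := (Real.log_exp _).symm
        _ ≤ Real.log (W M) := Real.log_le_log (Real.exp_pos _) this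
    calc η * ∑ e, q e * G M e = ∑ e, q e * (η * G M e) := by
          rw [Finset.mul_sum]; apply Finset.sum_congr rfl; intro e _; ring
      _ ≤ ∑ e, q e * Real.log (W M) := Finset.sum_le_sum fun e _ =>
          mul_le_mul_of_nonneg_left (h1 e) (hq e)
      _ = Real.log (W M) := by rw [← Finset.sum_mul, hq1, one_mul]
  -- combine
  set Q := ∑ m ∈ Finset.range M, ∑ e, q e * g m e with hQ
  set Pg := ∑ m ∈ Finset.range M, ∑ e, p m e * g m e with hPg
  have main : η * Q ≤ Real.log (Fintype.card E) + η * Pg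
      + M * (η ^ 2 * (b - a) ^ 2 / 8) := by
    have := tele
    rw [hW0] at this
    linarith
  have final : Q - Pg ≤ (Real.log (Fintype.card E) + M * (η ^ 2 * (b - a) ^ 2 / 8)) / η := by
    rw [le_div_iff₀ hη]
    nlinarith [main]
  calc Q - Pg ≤ (Real.log (Fintype.card E) + M * (η ^ 2 * (b - a) ^ 2 / 8)) / η := final
    _ = Real.log (Fintype.card E) / η + η * (b - a) ^ 2 * M / 8 := by
        field_simp
end

section
/- Let w : [0,∞) → ℝ satisfy w' = f∘Φ on [0, T_sel] with 0 ≤ f ≤ ‖f‖_∞ and w(0) = 0, and on [T_sel, T_sel + T_renorm] satisfy w(T_sel + T_renorm) = b1/b2 + (w(T_sel) − b1/b2)·exp(−b2·a0·T_renorm). Then |w(T_sel + T_renorm) − b1/b2| ≤ max(b1/b2, ‖f‖_∞·T_sel)·exp(−b2·a0·T_renorm). In particular w(T_sel + T_renorm) → b1/b2 as T_renorm → ∞. -/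
open Filter

/-- Proposition 1: after the selection phase, the weight concentration is
exponentially close to the equilibrium `b1/b2`, and converges to it as the
renormalization duration grows. -/
theorem weight_renormalization_bound
    (b1 b2 a0 Tsel : ℝ) (hb1 : 0 < b1) (hb2 : 0 < b2) (ha0 : 0 < a0)
    (hTsel : 0 < Tsel)
    (f : ℝ → ℝ) (fnorm : ℝ) (hf : ∀ x, 0 ≤ f x ∧ f x ≤ fnorm)
    (Φ : ℝ → ℝ) (hΦ : Continuous Φ)
    (w : ℝ → ℝ) (hw0 : w 0 = 0)
    (hode : ∀ t ∈ Set.Icc (0 : ℝ) Tsel,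
      HasDerivWithinAt w (f (Φ t)) (Set.Icc 0 Tsel) t) :
    (∀ Trenorm : ℝ, 0 < Trenorm →
      w (Tsel + Trenorm)
          = b1 / b2 + (w Tsel - b1 / b2) * Real.exp (-(b2 * a0 * Trenorm)) →
      |w (Tsel + Trenorm) - b1 / b2|
        ≤ max (b1 / b2) (fnorm * Tsel) * Real.exp (-(b2 * a0 * Trenorm)))
    ∧ Tendsto
        (fun Trenorm : ℝ =>
          b1 / b2 + (w Tsel - b1 / b2) * Real.exp (-(b2 * a0 * Trenorm)))
        atTop (nhds (b1 / b2)) := by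
  have h0mem : (0 : ℝ) ∈ Set.Icc (0 : ℝ) Tsel := ⟨le_refl 0, hTsel.le⟩
  have hTmem : Tsel ∈ Set.Icc (0 : ℝ) Tsel := ⟨hTsel.le, le_refl Tsel⟩
  -- upper bound: w Tsel ≤ fnorm * Tsel
  have hupper : w Tsel ≤ fnorm * Tsel := by
    have := Convex.norm_image_sub_le_of_norm_hasDerivWithin_le
      (f := w) (f' := fun t => f (Φ t)) (s := Set.Icc 0 Tsel) (C := fnorm)
      hode (fun x hx => by
        rw [Real.norm_eq_abs, abs_of_nonneg (hf (Φ x)).1]; exact (hf (Φ x)).2)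
      (convex_Icc 0 Tsel) h0mem hTmem
    rw [hw0, sub_zero, sub_zero, Real.norm_eq_abs, Real.norm_eq_abs,
      abs_of_pos hTsel] at this
    exact (le_abs_self _).trans this
  -- lower bound: 0 ≤ w Tsel
  have hlower : 0 ≤ w Tsel := by
    have hmono : MonotoneOn w (Set.Icc (0 : ℝ) Tsel) := by
      apply monotoneOn_of_hasDerivWithinAt_nonneg (f' := fun t => f (Φ t))
        (convex_Icc 0 Tsel)
      · exact fun x hx => (hode x hx).continuousWithinAt
      · exact fun x hx => ((hode x (interior_subset hx)).mono interior_subset)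
      · exact fun x _ => (hf (Φ x)).1
    have := hmono h0mem hTmem hTsel.le
    rwa [hw0] at this
  have hkey : |w Tsel - b1 / b2| ≤ max (b1 / b2) (fnorm * Tsel) := by
    rw [abs_sub_le_iff]
    constructor
    · have : w Tsel - b1 / b2 ≤ fnorm * Tsel :=
        le_trans (by linarith [div_pos hb1 hb2]) hupper
      exact this.trans (le_max_right _ _)
    · have : b1 / b2 - w Tsel ≤ b1 / b2 := by linarith
      exact this.trans (le_max_left _ _)
  constructor
  · intro Trenorm _ heq
    rw [heq]
    have : b1 / b2 + (w Tsel - b1 / b2) * Real.exp (-(b2 * a0 * Trenorm)) - b1 / b2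
        = (w Tsel - b1 / b2) * Real.exp (-(b2 * a0 * Trenorm)) := by ring
    rw [this, abs_mul, abs_of_pos (Real.exp_pos _)]
    exact mul_le_mul_of_nonneg_right hkey (Real.exp_pos _).le
  · have hexp : Tendsto (fun Trenorm : ℝ => Real.exp (-(b2 * a0 * Trenorm)))
        atTop (nhds 0) := by
      apply Real.tendsto_exp_atBot.comp
      apply tendsto_neg_atBot_iff.mpr
      exact Tendsto.const_mul_atTop (mul_pos hb2 ha0) tendsto_id
    have := (hexp.const_mul (w Tsel - b1 / b2)).const_add (b1 / b2)
    simpa using this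
end

section
/- Let K be a finite set of classes, and for each m ∈ [M] let o_m ∈ K be the class of sample m, with M^k := #{m : o_m = k} > 0 for all k. For real numbers (x^k_m)_{k∈K, m∈[M]}, define disc^k := (1/M^k)·Σ_{m: o_m=k} x^k_m − (1/(|K|−1))·Σ_{k'≠k} (1/M^{k'})·Σ_{m: o_m=k'} x^k_m (i.e. the average of x^k_m over m with o_m ≠ k, averaged first within each class k' ≠ k, then uniformly over k' ≠ k), and Disc := (1/|K|)·Σ_{k*∈K} (1/(|K|−1))·Σ_{k≠k*} (1/M^{k*})·Σ_{m: o_m=k*} (x^{k*}_m − x^k_m). Then Disc = (1/|K|)·Σ_{k∈K} disc^k. -/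
/-- Index-exchange identity: the global network discrepancy equals the average
of the local species discrepancies. -/
theorem network_discrepancy_eq_avg_species_discrepancy
    (K : Type*) [Fintype K] [DecidableEq K] (hK : 1 < Fintype.card K)
    (M : ℕ) (o : Fin M → K)
    (hcls : ∀ k : K, (Finset.univ.filter (fun m => o m = k)).Nonempty)
    (x : K → Fin M → ℝ)
    (mean : Finset (Fin M) → (Fin M → ℝ) → ℝ)
    (hmean : ∀ S f, mean S f = (∑ m ∈ S, f m) / S.card)
    (disc : K → ℝ)
    (hdisc : ∀ k, disc k =
      mean (Finset.univ.filter (fun m => o m = k)) (x k)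
        - (1 / ((Fintype.card K : ℝ) - 1)) *
            ∑ k' ∈ Finset.univ.erase k,
              mean (Finset.univ.filter (fun m => o m = k')) (x k))
    (Disc : ℝ)
    (hDisc : Disc = (1 / (Fintype.card K : ℝ)) *
      ∑ kstar : K, (1 / ((Fintype.card K : ℝ) - 1)) *
        ∑ k ∈ Finset.univ.erase kstar,
          mean (Finset.univ.filter (fun m => o m = kstar))
            (fun m => x kstar m - x k m)) :
    Disc = (1 / (Fintype.card K : ℝ)) * ∑ k : K, disc k := by
  classical
  have hb : (1 : ℝ) < (Fintype.card K : ℝ) := by exact_mod_cast hK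
  have hc : ((Fintype.card K : ℝ) - 1) ≠ 0 := by linarith
  have hcard : ∀ a : K, ((Finset.univ.erase a).card : ℝ)
      = (Fintype.card K : ℝ) - 1 := by
    intro a
    rw [Finset.card_erase_of_mem (Finset.mem_univ a), Finset.card_univ]
    have h1 : 1 ≤ Fintype.card K := le_of_lt hK
    push_cast [Nat.cast_sub h1]
    ring
  have key : ∀ a : K, (1 / ((Fintype.card K : ℝ) - 1)) *
      ∑ k ∈ Finset.univ.erase a,
        mean (Finset.univ.filter (fun m => o m = a)) (fun m => x a m - x k m)
    = mean (Finset.univ.filter (fun m => o m = a)) (x a)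
      - (1 / ((Fintype.card K : ℝ) - 1)) *
          ∑ k ∈ Finset.univ.erase a,
            mean (Finset.univ.filter (fun m => o m = a)) (x k) := by
    intro a
    have h1 : ∀ k : K,
        mean (Finset.univ.filter (fun m => o m = a)) (fun m => x a m - x k m)
        = mean (Finset.univ.filter (fun m => o m = a)) (x a)
          - mean (Finset.univ.filter (fun m => o m = a)) (x k) := by
      intro k
      rw [hmean, hmean, hmean, Finset.sum_sub_distrib, sub_div]
    rw [Finset.sum_congr rfl (fun k _ => h1 k), Finset.sum_sub_distrib,
      Finset.sum_const, nsmul_eq_mul, hcard, mul_sub]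
    congr 1
    field_simp
  rw [hDisc]
  congr 1
  rw [Finset.sum_congr rfl (fun a _ => key a)]
  have hR : ∀ k : K, disc k =
      mean (Finset.univ.filter (fun m => o m = k)) (x k)
        - (1 / ((Fintype.card K : ℝ) - 1)) *
            ∑ k' ∈ Finset.univ.erase k,
              mean (Finset.univ.filter (fun m => o m = k')) (x k) := hdisc
  rw [Finset.sum_congr rfl (fun k _ => hR k), Finset.sum_sub_distrib,
    Finset.sum_sub_distrib]
  congr 1
  rw [← Finset.mul_sum, ← Finset.mul_sum]
  congr 1
  exact Finset.sum_comm' (fun a b => by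
    simp [Finset.mem_erase, ne_comm, eq_comm])
    (f := fun a k => mean (Finset.univ.filter (fun m => o m = a)) (x k))
end

section
/- Let I be a finite set of features, n ≤ |I|, and J̄ a finite collection of subsets of I of size n. Model samples as functions o : I → {0,1}; say a set j ∈ J̄ is activated by o if o_i = 1 for all i ∈ j. Define the hypothesis class H := {1_F : F ⊆ J̄} where 1_F(o) = 1 iff some j ∈ F is activated by o. Then the VC-dimension of H equals |J̄|. -/
/-- A finset `E` of samples is shattered by the class
`H = {1_F : F ⊆ Jb}`, where `1_F o = 1` iff some `j ∈ F` is activated by `o`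
(i.e. `o i = true` for all `i ∈ j`). -/
def ShatteredBy {I : Type*} [DecidableEq (I → Bool)]
    (Jb : Finset (Finset I)) (E : Finset (I → Bool)) : Prop :=
  ∀ E' ⊆ E, ∃ F ⊆ Jb, ∀ o ∈ E,
    ((∃ j ∈ F, ∀ i ∈ j, o i = true) ↔ o ∈ E')

/-- Proposition 7: the VC-dimension of the hypothesis class
`H = {1_F : F ⊆ Jb}` equals `|Jb|`: some shattered set has cardinality `|Jb|`,
and every shattered set has cardinality at most `|Jb|`. -/
theorem vc_dimension_eq (I : Type*) [Fintype I] [DecidableEq I]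
    (n : ℕ) (hn : n ≤ Fintype.card I)
    (Jb : Finset (Finset I)) (hJ : ∀ j ∈ Jb, j.card = n) :
    IsGreatest {c : ℕ | ∃ E : Finset (I → Bool),
      ShatteredBy Jb E ∧ E.card = c} Jb.card := by
  classical
  constructor
  · -- membership: witness E = { indicator of j : j ∈ Jb }
    refine ⟨Jb.image (fun j => fun i => decide (i ∈ j)), ?_, ?_⟩
    · intro E' hE'
      refine ⟨Jb.filter (fun j => (fun i => decide (i ∈ j)) ∈ E'),
        Finset.filter_subset _ _, ?_⟩
      intro o ho
      obtain ⟨j, hj, rfl⟩ := Finset.mem_image.mp ho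
      constructor
      · rintro ⟨j', hj', hact⟩
        obtain ⟨hj'J, hj'E⟩ := Finset.mem_filter.mp hj'
        have hsub : j' ⊆ j := fun i hi => by simpa using hact i hi
        have hcard : j.card ≤ j'.card := by rw [hJ j hj, hJ j' hj'J]
        have : j' = j := Finset.eq_of_subset_of_card_le hsub hcard
        subst this; exact hj'E
      · intro h
        exact ⟨j, Finset.mem_filter.mpr ⟨hj, h⟩, fun i hi => by simp [hi]⟩
    · rw [Finset.card_image_of_injOn]
      intro j hj j' hj' h
      ext i
      have := congrFun h i
      simpa using this
  · -- upper bound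
    rintro c ⟨E, hSh, rfl⟩
    choose F hF1 hF2 using hSh
    let f : Finset (I → Bool) → Finset (Finset I) :=
      fun E' => if h : E' ⊆ E then F E' h else ∅
    have key : (E.powerset).card ≤ (Jb.powerset).card := by
      apply Finset.card_le_card_of_injOn f
      · intro E' hE'
        have h : E' ⊆ E := Finset.mem_powerset.mp hE'
        simp only [f, dif_pos h]
        exact Finset.mem_powerset.mpr (hF1 E' h)
      · intro E1 hE1 E2 hE2 hf
        have h1 : E1 ⊆ E := Finset.mem_powerset.mp hE1
        have h2 : E2 ⊆ E := Finset.mem_powerset.mp hE2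
        simp only [f, dif_pos h1, dif_pos h2] at hf
        ext o
        constructor
        · intro ho
          have hoE : o ∈ E := h1 ho
          exact (hF2 E2 h2 o hoE).mp (by rw [← hf]; exact (hF2 E1 h1 o hoE).mpr ho)
        · intro ho
          have hoE : o ∈ E := h2 ho
          exact (hF2 E1 h1 o hoE).mp (by rw [hf]; exact (hF2 E2 h2 o hoE).mpr ho)
    rw [Finset.card_powerset, Finset.card_powerset] at key
    exact (Nat.pow_le_pow_iff_right (by norm_num)).mp key
end

section
/- In the setting of the VC-dimension proposition, every set E of samples shattered by H = {1_F : F ⊆ J̄} satisfies |E| ≤ |J̄|. Concretely: if E is shattered, then for each o ∈ E there exists j_o ∈ J̄ such that o is the unique element of E activating j_o, and the map o ↦ j_o is injective. -/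
/-- Every set `E` of samples shattered by `{1_F : F ⊆ Jb}` satisfies
`|E| ≤ |Jb|`: each `o ∈ E` admits `j_o ∈ Jb` activated by `o` and by no other
element of `E`, the map `o ↦ j_o` is injective, and hence `E.card ≤ Jb.card`. -/
theorem shattered_card_le (I : Type*) [Fintype I] [DecidableEq I]
    (Jb : Finset (Finset I)) (E : Finset (I → Bool))
    (hshatter : ∀ E' ⊆ E, ∃ F ⊆ Jb, ∀ o ∈ E,
      ((∃ j ∈ F, ∀ i ∈ j, o i = true) ↔ o ∈ E')) :
    (∃ jmap : (I → Bool) → Finset I,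
      (∀ o ∈ E, jmap o ∈ Jb ∧
        ∀ o' ∈ E, ((∀ i ∈ jmap o, o' i = true) ↔ o' = o)) ∧
      Set.InjOn jmap E)
    ∧ E.card ≤ Jb.card := by
  classical
  have key : ∀ o ∈ E, ∃ j, j ∈ Jb ∧ ∀ o' ∈ E, ((∀ i ∈ j, o' i = true) ↔ o' = o) := by
    intro o ho
    obtain ⟨F, hF, hiff⟩ := hshatter {o} (Finset.singleton_subset_iff.mpr ho)
    obtain ⟨j, hjF, hj⟩ := (hiff o ho).mpr (Finset.mem_singleton_self o)
    refine ⟨j, hF hjF, fun o' ho' => ⟨fun h => ?_, fun h => h ▸ hj⟩⟩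
    have := (hiff o' ho').mp ⟨j, hjF, h⟩
    exact Finset.mem_singleton.mp this
  set jmap : (I → Bool) → Finset I := fun o =>
    if h : o ∈ E then (key o h).choose else ∅ with hjmap
  have hprop : ∀ o ∈ E, jmap o ∈ Jb ∧
      ∀ o' ∈ E, ((∀ i ∈ jmap o, o' i = true) ↔ o' = o) := by
    intro o ho
    simp only [hjmap, dif_pos ho]
    exact (key o ho).choose_spec
  have hinj : Set.InjOn jmap E := by
    intro a ha b hb hab
    have := ((hprop a ha).2 a ha).mpr rfl
    rw [hab] at this
    exact ((hprop b hb).2 a ha).mp this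
  refine ⟨⟨jmap, hprop, hinj⟩, ?_⟩
  exact Finset.card_le_card_of_injOn jmap (fun o ho => (hprop o ho).1) hinj
end

section
/- Let O be a finite set of sample types partitioned into classes K, and let J̄ be a finite index set. Suppose (binary flux) there is p > 0 such that for all j ∈ J̄ and o ∈ O, the quantity Φ(o,j) ∈ {0, p}; write O^j := {o : Φ(o,j) = p}, and assume all O^j have equal cardinality Z. Then the following are equivalent: (i) for every class k there exists E^k ⊆ J̄ with k = ⋃_{j∈E^k} O^j; (ii) there exists a family (q^{j→k})_{j∈J̄,k∈K} of nonnegative weights with Σ_j q^{j→k} = b1/b2 for each k, such that Σ_j q^{j→k}·Φ(o,j) > 0 if and only if o ∈ k; (iii) the family defined by q̄^{j→k} := (b1/b2)·(1/|J̄^k|)·1_{j∈J̄^k}, where J̄^k := argmax_j Φ_disc^{j→k} with Φ_disc^{j→k} := mean_{o∈k} Φ(o,j) − mean over classes k'≠k of mean_{o∈k'} Φ(o,j), satisfies the property in (ii). -/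
open scoped Classical

/-- Theorem 5: under the binary-flux assumption, (i) decomposability of every
class as a union of the activation sets `O^j`, (ii) existence of an optimal
weight family, and (iii) optimality of the asymptotic weight family (uniform
on the argmax of the flux discrepancy) are equivalent. -/
theorem optimal_weight_family_equiv
    (O K J : Type*) [Fintype O] [Fintype K] [Fintype J]
    [DecidableEq K] [Nonempty J]
    (hK : 1 < Fintype.card K)
    (cls : O → K) (hcls : ∀ k, (Finset.univ.filter (fun o => cls o = k)).Nonempty)
    (Φ : O → J → ℝ) (p : ℝ) (hp : 0 < p)
    (hbin : ∀ o j, Φ o j = 0 ∨ Φ o j = p)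
    (Z : ℕ)
    (hZ : ∀ j, (Finset.univ.filter (fun o => Φ o j = p)).card = Z)
    (b1 b2 : ℝ) (hb1 : 0 < b1) (hb2 : 0 < b2)
    (Φdisc : J → K → ℝ)
    (hΦdisc : ∀ j k, Φdisc j k =
      (∑ o ∈ Finset.univ.filter (fun o => cls o = k), Φ o j)
          / (Finset.univ.filter (fun o => cls o = k)).card
        - (1 / ((Fintype.card K : ℝ) - 1)) *
            ∑ k' ∈ Finset.univ.erase k,
              (∑ o ∈ Finset.univ.filter (fun o => cls o = k'), Φ o j)
                / (Finset.univ.filter (fun o => cls o = k')).card)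
    (Jbk : K → Finset J)
    (hJbk : ∀ k, Jbk k = Finset.univ.filter (fun j => ∀ j', Φdisc j' k ≤ Φdisc j k))
    (qbar : J → K → ℝ)
    (hqbar : ∀ j k, qbar j k =
      (b1 / b2) * (if j ∈ Jbk k then (1 : ℝ) / (Jbk k).card else 0)) :
    ((∀ k, ∃ Ek : Finset J, ∀ o, (cls o = k ↔ ∃ j ∈ Ek, Φ o j = p))
      ↔ (∃ q : J → K → ℝ, (∀ j k, 0 ≤ q j k)
          ∧ (∀ k, ∑ j, q j k = b1 / b2)
          ∧ (∀ o k, (0 < ∑ j, q j k * Φ o j ↔ cls o = k))))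
    ∧ ((∀ k, ∃ Ek : Finset J, ∀ o, (cls o = k ↔ ∃ j ∈ Ek, Φ o j = p))
      ↔ (∀ o k, (0 < ∑ j, qbar j k * Φ o j ↔ cls o = k))) := by
  -- basic facts
  have hΦ0 : ∀ o j, 0 ≤ Φ o j := by
    intro o j; rcases hbin o j with h | h <;> simp [h, hp.le]
  have hm1pos : (0:ℝ) < (Fintype.card K : ℝ) - 1 := by
    have : (2:ℝ) ≤ (Fintype.card K : ℝ) := by exact_mod_cast hK
    linarith
  have hn : ∀ k, (0:ℝ) < ((Finset.univ.filter (fun o => cls o = k)).card : ℝ) := by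
    intro k
    exact_mod_cast Finset.card_pos.mpr (hcls k)
  -- counts
  set a : J → K → ℕ :=
    fun j k => ((Finset.univ.filter (fun o => cls o = k)).filter (fun o => Φ o j = p)).card
    with ha
  have hsum : ∀ j k,
      ∑ o ∈ Finset.univ.filter (fun o => cls o = k), Φ o j = p * a j k := by
    intro j k
    have h1 : ∀ o ∈ Finset.univ.filter (fun o => cls o = k),
        Φ o j = if Φ o j = p then p else 0 := by
      intro o _; rcases hbin o j with h | h <;> simp [h, hp.ne]
    rw [Finset.sum_congr rfl h1, Finset.sum_ite, Finset.sum_const, Finset.sum_const_zero,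
      add_zero, nsmul_eq_mul, mul_comm]
  have hZsum : ∀ j, ∑ k, a j k = Z := by
    intro j
    rw [← hZ j,
      Finset.card_eq_sum_card_fiberwise (f := cls) (t := (Finset.univ : Finset K))
        (fun x _ => Finset.mem_univ _)]
    exact Finset.sum_congr rfl fun k _ => congrArg Finset.card (Finset.filter_comm _ _ _)
  have hΦd : ∀ j k, Φdisc j k =
      p * a j k / ((Finset.univ.filter (fun o => cls o = k)).card : ℝ)
        - (1 / ((Fintype.card K : ℝ) - 1)) *
            ∑ k' ∈ Finset.univ.erase k,
              p * a j k' / ((Finset.univ.filter (fun o => cls o = k')).card : ℝ) := by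
    intro j k
    rw [hΦdisc j k, hsum]
    congr 1
    congr 1
    exact Finset.sum_congr rfl fun k' _ => by rw [hsum]
  -- value at a "good" j (one with O^j ⊆ class k)
  have hgood_val : ∀ j k, (∀ o, Φ o j = p → cls o = k) →
      Φdisc j k = p * Z / ((Finset.univ.filter (fun o => cls o = k)).card : ℝ) := by
    intro j k hg
    have hak : a j k = Z := by
      rw [ha]
      simp only
      rw [← hZ j]
      congr 1
      ext o
      simp only [Finset.mem_filter, Finset.mem_univ, true_and]
      exact ⟨fun h => h.2, fun h => ⟨hg o h, h⟩⟩
    have hak' : ∀ k' ∈ Finset.univ.erase k, a j k' = 0 := by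
      intro k' hk'
      have hne : k' ≠ k := (Finset.mem_erase.mp hk').1
      rw [ha]
      simp only
      rw [Finset.card_eq_zero]
      ext o
      simp only [Finset.mem_filter, Finset.mem_univ, true_and, Finset.notMem_empty,
        iff_false, not_and]
      intro h1 h2
      exact hne (h1 ▸ hg o h2)
    rw [hΦd j k, hak]
    have : ∑ k' ∈ Finset.univ.erase k,
        p * a j k' / ((Finset.univ.filter (fun o => cls o = k')).card : ℝ) = 0 := by
      refine Finset.sum_eq_zero fun k' hk' => ?_
      rw [hak' k' hk']
      simp
    rw [this]
    ring
  -- strict bound at a "non-good" j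
  have hbad_val : ∀ j k, ¬ (∀ o, Φ o j = p → cls o = k) →
      Φdisc j k < p * Z / ((Finset.univ.filter (fun o => cls o = k)).card : ℝ) := by
    intro j k hg
    push_neg at hg
    obtain ⟨o0, ho0, hco0⟩ := hg
    -- a j (cls o0) ≥ 1
    have h1 : 1 ≤ a j (cls o0) := by
      rw [ha]
      refine Finset.card_pos.mpr ⟨o0, ?_⟩
      simp [ho0]
    have hmem : cls o0 ∈ Finset.univ.erase k := Finset.mem_erase.mpr ⟨hco0, Finset.mem_univ _⟩
    have hsplit : a j k + ∑ k' ∈ Finset.univ.erase k, a j k' = Z := by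
      rw [Finset.add_sum_erase _ _ (Finset.mem_univ k)]
      exact hZsum j
    have h2 : a j (cls o0) ≤ ∑ k' ∈ Finset.univ.erase k, a j k' :=
      Finset.single_le_sum (fun _ _ => Nat.zero_le _) hmem
    have haZ : a j k < Z := by omega
    have haZ' : (a j k : ℝ) < (Z : ℝ) := by exact_mod_cast haZ
    have hc : 0 ≤ (1 / ((Fintype.card K : ℝ) - 1)) *
        ∑ k' ∈ Finset.univ.erase k,
          p * a j k' / ((Finset.univ.filter (fun o => cls o = k')).card : ℝ) := by
      refine mul_nonneg (by positivity) (Finset.sum_nonneg fun k' _ => ?_)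
      exact div_nonneg (mul_nonneg hp.le (Nat.cast_nonneg _)) (hn k').le
    have hlt : p * a j k / ((Finset.univ.filter (fun o => cls o = k)).card : ℝ)
        < p * Z / ((Finset.univ.filter (fun o => cls o = k)).card : ℝ) := by
      exact div_lt_div_of_pos_right (mul_lt_mul_of_pos_left haZ' hp) (hn k)
    rw [hΦd j k]
    linarith
  -- characterization of argmax set under decomposability
  have hchar : (∀ k, ∃ Ek : Finset J, ∀ o, (cls o = k ↔ ∃ j ∈ Ek, Φ o j = p)) →
      ∀ k j, j ∈ Jbk k ↔ (∀ o, Φ o j = p → cls o = k) := by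
    intro hdec k j
    obtain ⟨Ek, hEk⟩ := hdec k
    -- every member of Ek is good
    have hEgood : ∀ j' ∈ Ek, ∀ o, Φ o j' = p → cls o = k := by
      intro j' hj' o hΦo
      exact (hEk o).mpr ⟨j', hj', hΦo⟩
    -- there is a good j0
    obtain ⟨o1, ho1⟩ := hcls k
    have hco1 : cls o1 = k := (Finset.mem_filter.mp ho1).2
    obtain ⟨j0, hj0, hΦj0⟩ := (hEk o1).mp hco1
    have hgood0 := hEgood j0 hj0
    have hval0 := hgood_val j0 k hgood0
    rw [hJbk k]
    simp only [Finset.mem_filter, Finset.mem_univ, true_and]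
    constructor
    · intro hmax
      by_contra hbad
      have := hbad_val j k hbad
      have := hmax j0
      linarith [hval0 ▸ this]
    · intro hg j'
      rw [hgood_val j k hg]
      by_cases hg' : ∀ o, Φ o j' = p → cls o = k
      · rw [hgood_val j' k hg']
      · exact (hbad_val j' k hg').le
  -- (prop with nonneg q) → (i)
  have key1 : ∀ q : J → K → ℝ, (∀ j k, 0 ≤ q j k) →
      (∀ o k, (0 < ∑ j, q j k * Φ o j ↔ cls o = k)) →
      (∀ k, ∃ Ek : Finset J, ∀ o, (cls o = k ↔ ∃ j ∈ Ek, Φ o j = p)) := by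
    intro q hq0 hqpos k
    refine ⟨Finset.univ.filter (fun j => 0 < q j k), fun o => ?_⟩
    constructor
    · intro hok
      have hpos := (hqpos o k).mpr hok
      obtain ⟨j, _, hj⟩ := Finset.exists_lt_of_sum_lt (f := fun _ => (0:ℝ))
        (by simpa using hpos)
      have hΦp : Φ o j = p := by
        rcases hbin o j with h | h
        · simp [h] at hj
        · exact h
      have hqj : 0 < q j k := by
        rcases lt_or_eq_of_le (hq0 j k) with h | h
        · exact h
        · rw [← h] at hj; simp at hj
      exact ⟨j, by simp [hqj], hΦp⟩
    · rintro ⟨j, hj, hΦp⟩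
      simp only [Finset.mem_filter, Finset.mem_univ, true_and] at hj
      apply (hqpos o k).mp
      refine Finset.sum_pos' (fun j' _ => mul_nonneg (hq0 j' k) (hΦ0 o j')) ⟨j, Finset.mem_univ j, ?_⟩
      rw [hΦp]
      exact mul_pos hj hp
  -- (i) → (iii property)
  have hi_to_iii : (∀ k, ∃ Ek : Finset J, ∀ o, (cls o = k ↔ ∃ j ∈ Ek, Φ o j = p)) →
      ∀ o k, (0 < ∑ j, qbar j k * Φ o j ↔ cls o = k) := by
    intro hdec o k
    constructor
    · intro hpos
      obtain ⟨j, _, hj⟩ := Finset.exists_lt_of_sum_lt (f := fun _ => (0:ℝ))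
        (by simpa using hpos)
      have hΦp : Φ o j = p := by
        rcases hbin o j with h | h
        · simp [h] at hj
        · exact h
      have hjm : j ∈ Jbk k := by
        by_contra hjm
        rw [hqbar j k, if_neg hjm] at hj
        simp at hj
      exact (hchar hdec k j).mp hjm o hΦp
    · intro hok
      obtain ⟨Ek, hEk⟩ := hdec k
      obtain ⟨j, hjE, hΦp⟩ := (hEk o).mp hok
      have hgood : ∀ o', Φ o' j = p → cls o' = k := fun o' h => (hEk o').mpr ⟨j, hjE, h⟩
      have hjm : j ∈ Jbk k := (hchar hdec k j).mpr hgood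
      have hcard : (0:ℝ) < ((Jbk k).card : ℝ) := by
        exact_mod_cast Finset.card_pos.mpr ⟨j, hjm⟩
      refine Finset.sum_pos' (fun j' _ => mul_nonneg ?_ (hΦ0 o j')) ⟨j, Finset.mem_univ j, ?_⟩
      · rw [hqbar j' k]
        refine mul_nonneg (div_nonneg hb1.le hb2.le) ?_
        split <;> positivity
      · rw [hqbar j k, if_pos hjm, hΦp]
        positivity
  -- qbar is nonnegative with correct sums
  have hqbar0 : ∀ j k, 0 ≤ qbar j k := by
    intro j k
    rw [hqbar j k]
    refine mul_nonneg (div_nonneg hb1.le hb2.le) ?_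
    split <;> positivity
  have hqbarsum : ∀ k, ∑ j, qbar j k = b1 / b2 := by
    intro k
    obtain ⟨j0, _, hj0⟩ := Finset.exists_max_image (Finset.univ : Finset J)
      (fun j => Φdisc j k) Finset.univ_nonempty
    have hj0m : j0 ∈ Jbk k := by
      rw [hJbk k]
      simp only [Finset.mem_filter, Finset.mem_univ, true_and]
      exact fun j' => hj0 j' (Finset.mem_univ j')
    have hcard : ((Jbk k).card : ℝ) ≠ 0 := by
      exact_mod_cast (Finset.card_pos.mpr ⟨j0, hj0m⟩).ne'
    have : ∑ j, qbar j k
        = (b1 / b2) * ∑ j, (if j ∈ Jbk k then (1 : ℝ) / (Jbk k).card else 0) := by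
      rw [Finset.mul_sum]
      exact Finset.sum_congr rfl fun j _ => hqbar j k
    rw [this, Finset.sum_ite_mem, Finset.univ_inter, Finset.sum_const, nsmul_eq_mul,
      mul_one_div, div_self hcard, mul_one]
  refine ⟨⟨fun hdec => ⟨qbar, hqbar0, hqbarsum, hi_to_iii hdec⟩, ?_⟩,
    hi_to_iii, fun hprop => key1 qbar hqbar0 hprop⟩
  rintro ⟨q, hq0, _, hqpos⟩
  exact key1 q hq0 hqpos
end

section
/- Under the binary flux assumption with all |O^j| = Z, classes of equal structure, and class decomposition k = ⋃_{j∈E^k} O^j with E^k maximal, the flux discrepancy satisfies: Φ_disc^{j→k} = (Z/|k|)·p for every j ∈ E^k, and Φ_disc^{j→k} ≤ ((Z−1)/|k|)·p for every j ∈ J̄ \ E^k. Consequently argmax_{j∈J̄} Φ_disc^{j→k} = E^k. -/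
open scoped Classical

/-- Flux-discrepancy computation under binary flux and class decomposition:
`Φdisc j k = (Z/|k|)·p` on `E^k`, `Φdisc j k ≤ ((Z−1)/|k|)·p` off `E^k`, and
the argmax of `Φdisc · k` is exactly `E^k`. -/
theorem flux_discrepancy_argmax
    (O K J : Type*) [Fintype O] [Fintype K] [Fintype J] [DecidableEq K]
    (hK : 1 < Fintype.card K)
    (cls : O → K) (hcls : ∀ k', (Finset.univ.filter (fun o => cls o = k')).Nonempty)
    (Φ : O → J → ℝ) (p : ℝ) (hp : 0 < p)
    (hbin : ∀ o j, Φ o j = 0 ∨ Φ o j = p)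
    (Z : ℕ) (hZpos : 0 < Z)
    (hZ : ∀ j, (Finset.univ.filter (fun o => Φ o j = p)).card = Z)
    (k : K)
    (Ek : Finset J)
    (hEk : Ek = Finset.univ.filter
      (fun j => ∀ o, Φ o j = p → cls o = k))
    (hdec : ∀ o, cls o = k ↔ ∃ j ∈ Ek, Φ o j = p)
    (Φdisc : J → ℝ)
    (hΦdisc : ∀ j, Φdisc j =
      (∑ o ∈ Finset.univ.filter (fun o => cls o = k), Φ o j)
          / (Finset.univ.filter (fun o => cls o = k)).card
        - (1 / ((Fintype.card K : ℝ) - 1)) *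
            ∑ k' ∈ Finset.univ.erase k,
              (∑ o ∈ Finset.univ.filter (fun o => cls o = k'), Φ o j)
                / (Finset.univ.filter (fun o => cls o = k')).card) :
    (∀ j ∈ Ek, Φdisc j =
        ((Z : ℝ) / (Finset.univ.filter (fun o => cls o = k)).card) * p)
    ∧ (∀ j ∉ Ek, Φdisc j ≤
        (((Z : ℝ) - 1) / (Finset.univ.filter (fun o => cls o = k)).card) * p)
    ∧ Finset.univ.filter (fun j => ∀ j', Φdisc j' ≤ Φdisc j) = Ek := by
  -- abbreviations
  set Ck := Finset.univ.filter (fun o => cls o = k) with hCk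
  have hck : (0 : ℝ) < (Ck.card : ℝ) := by
    exact_mod_cast Finset.card_pos.mpr (hcls k)
  have hΦnn : ∀ o j, 0 ≤ Φ o j := fun o j => by
    rcases hbin o j with h | h <;> simp [h, hp.le]
  -- binary sum formula
  have hsum : ∀ (S : Finset O) (j : J),
      ∑ o ∈ S, Φ o j = ((S.filter (fun o => Φ o j = p)).card : ℝ) * p := by
    intro S j
    rw [← Finset.sum_filter_add_sum_filter_not S (fun o => Φ o j = p)]
    have h1 : ∑ o ∈ S.filter (fun o => Φ o j = p), Φ o j
        = ((S.filter (fun o => Φ o j = p)).card : ℝ) * p := by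
      rw [Finset.sum_congr rfl (fun o ho => (Finset.mem_filter.mp ho).2),
        Finset.sum_const, nsmul_eq_mul]
    have h2 : ∑ o ∈ S.filter (fun o => ¬ Φ o j = p), Φ o j = 0 :=
      Finset.sum_eq_zero fun o ho =>
        (hbin o j).resolve_right (Finset.mem_filter.mp ho).2
    rw [h1, h2, add_zero]
  have hKpos : (0 : ℝ) < (Fintype.card K : ℝ) - 1 := by
    have : (1 : ℝ) < (Fintype.card K : ℝ) := by exact_mod_cast hK
    linarith
  -- part 1
  have part1 : ∀ j ∈ Ek, Φdisc j = ((Z : ℝ) / (Ck.card : ℝ)) * p := by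
    intro j hj
    rw [hEk, Finset.mem_filter] at hj
    have hj := hj.2
    have hkeq : Ck.filter (fun o => Φ o j = p)
        = Finset.univ.filter (fun o => Φ o j = p) := by
      ext o
      simp only [hCk, Finset.mem_filter, Finset.mem_univ, true_and]
      exact ⟨fun h => h.2, fun h => ⟨hj o h, h⟩⟩
    have hsk : ∑ o ∈ Ck, Φ o j = (Z : ℝ) * p := by
      rw [hsum, hkeq, hZ j]
    have hz : ∀ k' ∈ Finset.univ.erase k,
        (∑ o ∈ Finset.univ.filter (fun o => cls o = k'), Φ o j)
          / ((Finset.univ.filter (fun o => cls o = k')).card : ℝ) = 0 := by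
      intro k' hk'
      have hk'ne : k' ≠ k := (Finset.mem_erase.mp hk').1
      have : ∑ o ∈ Finset.univ.filter (fun o => cls o = k'), Φ o j = 0 := by
        apply Finset.sum_eq_zero
        intro o ho
        rcases hbin o j with h | h
        · exact h
        · exact absurd ((hj o h) ▸ (Finset.mem_filter.mp ho).2) hk'ne.symm
          -- cls o = k' but Φ o j = p forces cls o = k
      rw [this, zero_div]
    rw [hΦdisc j, Finset.sum_eq_zero hz, mul_zero, sub_zero, hsk]
    ring
  -- part 2
  have part2 : ∀ j ∉ Ek, Φdisc j ≤ (((Z : ℝ) - 1) / (Ck.card : ℝ)) * p := by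
    intro j hj
    rw [hEk, Finset.mem_filter] at hj
    push_neg at hj
    obtain ⟨o₀, ho₀p, ho₀k⟩ := hj (Finset.mem_univ j)
    have hcard : (Ck.filter (fun o => Φ o j = p)).card ≤ Z - 1 := by
      have hsub : Ck.filter (fun o => Φ o j = p)
          ⊆ (Finset.univ.filter (fun o => Φ o j = p)).erase o₀ := by
        intro o ho
        rw [Finset.mem_filter, hCk, Finset.mem_filter] at ho
        refine Finset.mem_erase.mpr ⟨?_, Finset.mem_filter.mpr ⟨Finset.mem_univ o, ho.2⟩⟩
        rintro rfl
        exact ho₀k ho.1.2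
      calc (Ck.filter (fun o => Φ o j = p)).card
          ≤ ((Finset.univ.filter (fun o => Φ o j = p)).erase o₀).card :=
            Finset.card_le_card hsub
        _ = Z - 1 := by
            rw [Finset.card_erase_of_mem
              (Finset.mem_filter.mpr ⟨Finset.mem_univ o₀, ho₀p⟩), hZ j]
    have hcardR : ((Ck.filter (fun o => Φ o j = p)).card : ℝ) ≤ (Z : ℝ) - 1 := by
      have : ((Ck.filter (fun o => Φ o j = p)).card : ℝ) ≤ ((Z - 1 : ℕ) : ℝ) := by
        exact_mod_cast hcard
      rwa [Nat.cast_sub hZpos, Nat.cast_one] at this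
    have hB : 0 ≤ (1 / ((Fintype.card K : ℝ) - 1)) *
        ∑ k' ∈ Finset.univ.erase k,
          (∑ o ∈ Finset.univ.filter (fun o => cls o = k'), Φ o j)
            / ((Finset.univ.filter (fun o => cls o = k')).card : ℝ) := by
      apply mul_nonneg (by positivity)
      apply Finset.sum_nonneg
      intro k' _
      exact div_nonneg (Finset.sum_nonneg fun o _ => hΦnn o j) (Nat.cast_nonneg _)
    rw [hΦdisc j]
    have hA : (∑ o ∈ Ck, Φ o j) / (Ck.card : ℝ)
        ≤ (((Z : ℝ) - 1) / (Ck.card : ℝ)) * p := by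
      rw [hsum, div_mul_eq_mul_div, div_le_div_iff₀ hck hck]
      nlinarith [mul_le_mul_of_nonneg_right (mul_le_mul_of_nonneg_right hcardR hp.le) hck.le]
    linarith
  -- Ek nonempty
  have hEkne : Ek.Nonempty := by
    obtain ⟨o, ho⟩ := hcls k
    obtain ⟨j, hj, _⟩ := (hdec o).mp (Finset.mem_filter.mp ho).2
    exact ⟨j, hj⟩
  have hlt : (((Z : ℝ) - 1) / (Ck.card : ℝ)) * p < ((Z : ℝ) / (Ck.card : ℝ)) * p := by
    apply mul_lt_mul_of_pos_right _ hp
    rw [div_lt_div_iff₀ hck hck]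
    nlinarith
  refine ⟨part1, part2, ?_⟩
  · ext j
    simp only [Finset.mem_filter, Finset.mem_univ, true_and]
    constructor
    · intro hmax
      by_contra hjno
      obtain ⟨j₀, hj₀⟩ := hEkne
      have h1 := part1 j₀ hj₀
      have h2 := part2 j hjno
      have := hmax j₀
      rw [h1] at this
      exact absurd (this.trans h2) (not_le.mpr hlt)
    · intro hj j'
      rw [part1 j hj]
      by_cases hj' : j' ∈ Ek
      · rw [part1 j' hj']
      · exact (part2 j' hj').trans hlt.le
end
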